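/- The language of finite words over the alphabet {∅, {p}} in which p holds at every even position cannot be defined by any LTLf formula, but arises as the Boolean abstraction of the language of the LTLfMT formula x = 0 ∧ G(wX x = x+1 ∧ (∃y (x = y+y) → P(x))) over linear integer arithmetic with an uninterpreted unary predicate P. -/
import Mathlib


/-- LTLf formulas over atomic propositions `α` (with classical negation). -/
inductive LTLf (α : Type) : Type
  | atom : α → LTLf α
  | not : LTLf α → LTLf α
  | and : LTLf α → LTLf α → LTLf α
  | or : LTLf α → LTLf α → LTLf α
  | next : LTLf α → LTLf α
  | wnext : LTLf α → LTLf α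
  | until_ : LTLf α → LTLf α → LTLf α
  | release : LTLf α → LTLf α → LTLf α

/-- Finite-trace satisfaction: a trace is a finite list of states (valuations). -/
def Sat {α : Type} (σ : List (α → Prop)) : LTLf α → ℕ → Prop
  | .atom a, i => (σ.getD i (fun _ => False)) a
  | .not φ, i => ¬ Sat σ φ i
  | .and φ ψ, i => Sat σ φ i ∧ Sat σ ψ i
  | .or φ ψ, i => Sat σ φ i ∨ Sat σ ψ i
  | .next φ, i => i < σ.length - 1 ∧ Sat σ φ (i + 1)
  | .wnext φ, i => i = σ.length - 1 ∨ Sat σ φ (i + 1)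
  | .until_ φ ψ, i => ∃ j, i ≤ j ∧ j < σ.length ∧ Sat σ ψ j ∧ ∀ k, i ≤ k → k < j → Sat σ φ k
  | .release φ ψ, i => (∀ j, i ≤ j → j < σ.length → Sat σ ψ j) ∨
      ∃ k, i ≤ k ∧ k < σ.length ∧ Sat σ φ k ∧ ∀ j, i ≤ j → j ≤ k → Sat σ ψ j

def TrW (n : ℕ) : List (Unit → Prop) :=
  List.replicate n (fun _ => True) ++ [fun _ => False]

lemma trw_length (n : ℕ) : (TrW n).length = n + 1 := by simp [TrW]

lemma trw_getD (n i : ℕ) (a : Unit) :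
    ((TrW n).getD i (fun _ => False)) a ↔ i < n := by
  unfold TrW
  rcases lt_trichotomy i n with h | h | h
  · rw [List.getD_eq_getElem _ _ (by simp; omega)]
    rw [List.getElem_append_left (by simpa)]
    simp [h]
  · subst h
    rw [List.getD_eq_getElem _ _ (by simp)]
    rw [List.getElem_append_right (by simp)]
    simp
  · rw [List.getD_eq_default _ _ (by simp; omega)]
    simp; omega

lemma satInv (φ : LTLf Unit) : ∀ n i n' i', i ≤ n → i' ≤ n' → n - i = n' - i' →
    (Sat (TrW n) φ i ↔ Sat (TrW n') φ i') := by
  induction φ with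
  | atom a =>
    intro n i n' i' h1 h2 h3
    show ((TrW n).getD i _) a ↔ ((TrW n').getD i' _) a
    rw [trw_getD, trw_getD]; omega
  | not φ ih =>
    intro n i n' i' h1 h2 h3
    exact not_congr (ih n i n' i' h1 h2 h3)
  | and φ ψ ihφ ihψ =>
    intro n i n' i' h1 h2 h3
    exact and_congr (ihφ n i n' i' h1 h2 h3) (ihψ n i n' i' h1 h2 h3)
  | or φ ψ ihφ ihψ =>
    intro n i n' i' h1 h2 h3
    exact or_congr (ihφ n i n' i' h1 h2 h3) (ihψ n i n' i' h1 h2 h3)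
  | next φ ih =>
    intro n i n' i' h1 h2 h3
    show (i < (TrW n).length - 1 ∧ _) ↔ (i' < (TrW n').length - 1 ∧ _)
    rw [trw_length, trw_length]
    constructor
    · rintro ⟨ha, hb⟩
      exact ⟨by omega, (ih n (i+1) n' (i'+1) (by omega) (by omega) (by omega)).mp hb⟩
    · rintro ⟨ha, hb⟩
      exact ⟨by omega, (ih n (i+1) n' (i'+1) (by omega) (by omega) (by omega)).mpr hb⟩
  | wnext φ ih =>
    intro n i n' i' h1 h2 h3
    show (i = (TrW n).length - 1 ∨ _) ↔ (i' = (TrW n').length - 1 ∨ _)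
    rw [trw_length, trw_length]
    simp only [Nat.add_sub_cancel]
    constructor
    · rintro (ha | hb)
      · left; omega
      · by_cases hi : i = n
        · left; omega
        · right; exact (ih n (i+1) n' (i'+1) (by omega) (by omega) (by omega)).mp hb
    · rintro (ha | hb)
      · left; omega
      · by_cases hi : i' = n'
        · left; omega
        · right; exact (ih n (i+1) n' (i'+1) (by omega) (by omega) (by omega)).mpr hb
  | until_ φ ψ ihφ ihψ =>
    intro n i n' i' h1 h2 h3
    show (∃ j, _) ↔ (∃ j, _)
    constructor
    · rintro ⟨j, hj1, hj2, hj3, hj4⟩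
      rw [trw_length] at hj2
      refine ⟨i' + (j - i), by omega, by rw [trw_length]; omega,
        (ihψ n j n' (i' + (j - i)) (by omega) (by omega) (by omega)).mp hj3, ?_⟩
      intro k hk1 hk2
      exact (ihφ n (i + (k - i')) n' k (by omega) (by omega) (by omega)).mp
        (hj4 (i + (k - i')) (by omega) (by omega))
    · rintro ⟨j, hj1, hj2, hj3, hj4⟩
      rw [trw_length] at hj2
      refine ⟨i + (j - i'), by omega, by rw [trw_length]; omega,
        (ihψ n (i + (j - i')) n' j (by omega) (by omega) (by omega)).mpr hj3, ?_⟩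
      intro k hk1 hk2
      exact (ihφ n k n' (i' + (k - i)) (by omega) (by omega) (by omega)).mpr
        (hj4 (i' + (k - i)) (by omega) (by omega))
  | release φ ψ ihφ ihψ =>
    intro n i n' i' h1 h2 h3
    show (_ ∨ ∃ k, _) ↔ (_ ∨ ∃ k, _)
    constructor
    · rintro (ha | ⟨k, hk1, hk2, hk3, hk4⟩)
      · left
        intro j hj1 hj2
        rw [trw_length] at hj2
        exact (ihψ n (i + (j - i')) n' j (by omega) (by omega) (by omega)).mp
          (ha (i + (j - i')) (by omega) (by rw [trw_length]; omega))
      · right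
        rw [trw_length] at hk2
        refine ⟨i' + (k - i), by omega, by rw [trw_length]; omega,
          (ihφ n k n' (i' + (k - i)) (by omega) (by omega) (by omega)).mp hk3, ?_⟩
        intro j hj1 hj2
        exact (ihψ n (i + (j - i')) n' j (by omega) (by omega) (by omega)).mp
          (hk4 (i + (j - i')) (by omega) (by omega))
    · rintro (ha | ⟨k, hk1, hk2, hk3, hk4⟩)
      · left
        intro j hj1 hj2
        rw [trw_length] at hj2
        exact (ihψ n j n' (i' + (j - i)) (by omega) (by omega) (by omega)).mpr
          (ha (i' + (j - i)) (by omega) (by rw [trw_length]; omega))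
      · right
        rw [trw_length] at hk2
        refine ⟨i + (k - i'), by omega, by rw [trw_length]; omega,
          (ihφ n (i + (k - i')) n' k (by omega) (by omega) (by omega)).mpr hk3, ?_⟩
        intro j hj1 hj2
        exact (ihψ n j n' (i' + (j - i)) (by omega) (by omega) (by omega)).mpr
          (hk4 (i' + (j - i)) (by omega) (by omega))

lemma satAt (φ : LTLf Unit) {n i : ℕ} (h : i ≤ n) :
    Sat (TrW n) φ i ↔ Sat (TrW (n - i)) φ 0 :=
  satInv φ n i (n - i) 0 h (Nat.zero_le _) (by omega)

lemma satNext (φ : LTLf Unit) (m : ℕ) :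
    Sat (TrW m) (.next φ) 0 ↔ 0 < m ∧ Sat (TrW (m - 1)) φ 0 := by
  show (0 < (TrW m).length - 1 ∧ Sat (TrW m) φ 1) ↔ _
  rw [trw_length]
  simp only [Nat.add_sub_cancel]
  constructor
  · rintro ⟨h1, h2⟩
    refine ⟨h1, ?_⟩
    have := (satAt φ (n := m) (i := 1) (by omega)).mp h2
    exact this
  · rintro ⟨h1, h2⟩
    exact ⟨h1, (satAt φ (n := m) (i := 1) (by omega)).mpr h2⟩

lemma satWnext (φ : LTLf Unit) (m : ℕ) :
    Sat (TrW m) (.wnext φ) 0 ↔ (m = 0 ∨ Sat (TrW (m - 1)) φ 0) := by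
  show (0 = (TrW m).length - 1 ∨ Sat (TrW m) φ 1) ↔ _
  rw [trw_length]
  simp only [Nat.add_sub_cancel]
  rcases Nat.eq_zero_or_pos m with hm | hm
  · simp [hm]
  · constructor
    · rintro (h | h)
      · omega
      · exact Or.inr ((satAt φ (n := m) (i := 1) (by omega)).mp h)
    · rintro (h | h)
      · omega
      · exact Or.inr ((satAt φ (n := m) (i := 1) (by omega)).mpr h)

lemma satUntil (φ ψ : LTLf Unit) (m : ℕ) :
    Sat (TrW m) (.until_ φ ψ) 0 ↔
      ∃ t ≤ m, Sat (TrW t) ψ 0 ∧ ∀ s, t < s → s ≤ m → Sat (TrW s) φ 0 := by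
  show (∃ j, 0 ≤ j ∧ j < (TrW m).length ∧ _ ∧ _) ↔ _
  rw [trw_length]
  constructor
  · rintro ⟨j, -, hj2, hj3, hj4⟩
    refine ⟨m - j, by omega, ?_, ?_⟩
    · exact (satAt ψ (n := m) (i := j) (by omega)).mp hj3
    · intro s hs1 hs2
      have := hj4 (m - s) (Nat.zero_le _) (by omega)
      have h2 := (satAt φ (n := m) (i := m - s) (by omega)).mp this
      rwa [show m - (m - s) = s by omega] at h2
  · rintro ⟨t, ht, hψ, hφ⟩
    refine ⟨m - t, Nat.zero_le _, by omega, ?_, ?_⟩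
    · rw [satAt ψ (by omega), show m - (m - t) = t by omega]; exact hψ
    · intro k _ hk
      rw [satAt φ (by omega)]
      exact hφ (m - k) (by omega) (by omega)

lemma satRelease (φ ψ : LTLf Unit) (m : ℕ) :
    Sat (TrW m) (.release φ ψ) 0 ↔
      ((∀ t ≤ m, Sat (TrW t) ψ 0) ∨
        ∃ t ≤ m, Sat (TrW t) φ 0 ∧ ∀ s, t ≤ s → s ≤ m → Sat (TrW s) ψ 0) := by
  show ((∀ j, 0 ≤ j → j < (TrW m).length → _) ∨ ∃ k, 0 ≤ k ∧ k < (TrW m).length ∧ _ ∧ _) ↔ _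
  rw [trw_length]
  constructor
  · rintro (h | ⟨k, -, hk2, hk3, hk4⟩)
    · left
      intro t ht
      have := h (m - t) (Nat.zero_le _) (by omega)
      rwa [satAt ψ (by omega), show m - (m - t) = t by omega] at this
    · right
      refine ⟨m - k, by omega, ?_, ?_⟩
      · exact (satAt φ (n := m) (i := k) (by omega)).mp hk3
      · intro s hs1 hs2
        have := hk4 (m - s) (Nat.zero_le _) (by omega)
        rwa [satAt ψ (by omega), show m - (m - s) = s by omega] at this
  · rintro (h | ⟨t, ht, hφ, hψ⟩)
    · left
      intro j _ hj
      rw [satAt ψ (by omega)]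
      exact h (m - j) (by omega)
    · right
      refine ⟨m - t, Nat.zero_le _, by omega, ?_, ?_⟩
      · rw [satAt φ (by omega), show m - (m - t) = t by omega]; exact hφ
      · intro j _ hj
        rw [satAt ψ (by omega)]
        exact hψ (m - j) (by omega) (by omega)

lemma satConst (φ : LTLf Unit) :
    ∃ N, ∀ m m', N ≤ m → N ≤ m' → (Sat (TrW m) φ 0 ↔ Sat (TrW m') φ 0) := by
  induction φ with
  | atom a =>
    refine ⟨1, fun m m' hm hm' => ?_⟩
    show ((TrW m).getD 0 _) a ↔ ((TrW m').getD 0 _) a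
    rw [trw_getD, trw_getD]; omega
  | not φ ih =>
    obtain ⟨N, hN⟩ := ih
    exact ⟨N, fun m m' hm hm' => not_congr (hN m m' hm hm')⟩
  | and φ ψ ihφ ihψ =>
    obtain ⟨N1, h1⟩ := ihφ; obtain ⟨N2, h2⟩ := ihψ
    exact ⟨max N1 N2, fun m m' hm hm' =>
      and_congr (h1 m m' (by omega) (by omega)) (h2 m m' (by omega) (by omega))⟩
  | or φ ψ ihφ ihψ =>
    obtain ⟨N1, h1⟩ := ihφ; obtain ⟨N2, h2⟩ := ihψ
    exact ⟨max N1 N2, fun m m' hm hm' =>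
      or_congr (h1 m m' (by omega) (by omega)) (h2 m m' (by omega) (by omega))⟩
  | next φ ih =>
    obtain ⟨N, hN⟩ := ih
    refine ⟨N + 1, fun m m' hm hm' => ?_⟩
    rw [satNext, satNext]
    exact and_congr (by omega : 0 < m ↔ 0 < m') (hN (m-1) (m'-1) (by omega) (by omega))
  | wnext φ ih =>
    obtain ⟨N, hN⟩ := ih
    refine ⟨N + 1, fun m m' hm hm' => ?_⟩
    rw [satWnext, satWnext]
    exact or_congr (by omega : m = 0 ↔ m' = 0) (hN (m-1) (m'-1) (by omega) (by omega))
  | until_ φ ψ ihφ ihψ =>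
    obtain ⟨N1, h1⟩ := ihφ; obtain ⟨N2, h2⟩ := ihψ
    refine ⟨max N1 N2, ?_⟩
    have key : ∀ m m', max N1 N2 ≤ m → max N1 N2 ≤ m' →
        Sat (TrW m) (.until_ φ ψ) 0 → Sat (TrW m') (.until_ φ ψ) 0 := by
      intro m m' hm hm' h
      rw [satUntil] at h ⊢
      obtain ⟨t, ht, hψt, hφs⟩ := h
      by_cases hc : t < m ∧ t ≤ m'
      · refine ⟨t, hc.2, hψt, fun s hs1 hs2 => ?_⟩
        by_cases hsm : s ≤ m
        · exact hφs s hs1 hsm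
        · exact (h1 m s (by omega) (by omega)).mp (hφs m hc.1 le_rfl)
      · refine ⟨m', le_rfl, (h2 t m' (by omega) (by omega)).mp hψt,
          fun s hs1 hs2 => absurd hs1 (by omega)⟩
    exact fun m m' hm hm' => ⟨key m m' hm hm', key m' m hm' hm⟩
  | release φ ψ ihφ ihψ =>
    obtain ⟨N1, h1⟩ := ihφ; obtain ⟨N2, h2⟩ := ihψ
    refine ⟨max N1 N2, ?_⟩
    have key : ∀ m m', max N1 N2 ≤ m → max N1 N2 ≤ m' →
        Sat (TrW m) (.release φ ψ) 0 → Sat (TrW m') (.release φ ψ) 0 := by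
      intro m m' hm hm' h
      rw [satRelease] at h ⊢
      rcases h with hall | ⟨t, ht, hφt, hψs⟩
      · left
        intro t' ht'
        by_cases hc : t' ≤ m
        · exact hall t' hc
        · exact (h2 m t' (by omega) (by omega)).mp (hall m le_rfl)
      · by_cases hc : t ≤ m'
        · refine Or.inr ⟨t, hc, hφt, fun s hs1 hs2 => ?_⟩
          by_cases hsm : s ≤ m
          · exact hψs s hs1 hsm
          · exact (h2 m s (by omega) (by omega)).mp (hψs m ht le_rfl)
        · refine Or.inr ⟨m', le_rfl, (h1 t m' (by omega) (by omega)).mp hφt,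
            fun s hs1 hs2 => ?_⟩
          have hs : s = m' := by omega
          subst hs
          exact (h2 t s (by omega) (by omega)).mp (hψs t le_rfl ht)
    exact fun m m' hm hm' => ⟨key m m' hm hm', key m' m hm' hm⟩

lemma part1 : ¬ ∃ φ : LTLf Unit, ∀ w : List Prop, w ≠ [] →
    ((∀ i : Fin w.length, Even (i : ℕ) → w.get i) ↔
      Sat (w.map fun q => fun _ : Unit => q) φ 0) := by
  rintro ⟨φ, hφ⟩
  obtain ⟨N, hN⟩ := satConst φ
  set W : ℕ → List Prop := fun n => List.replicate n True ++ [False] with hW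
  have hmap : ∀ n, (W n).map (fun q => fun _ : Unit => q) = TrW n := by
    intro n; simp [hW, TrW, List.map_replicate]
  have hne : ∀ n, W n ≠ [] := by intro n; simp [hW]
  have hlen : ∀ n, (W n).length = n + 1 := by intro n; simp [hW]
  have hgetlt : ∀ n i (h : i < (W n).length), i < n → (W n).get ⟨i, h⟩ := by
    intro n i h hi
    simp only [hW, List.get_eq_getElem]
    rw [List.getElem_append_left (by simpa using hi)]
    simp
  have hgetn : ∀ n (h : n < (W n).length), ¬ (W n).get ⟨n, h⟩ := by
    intro n h
    simp only [hW, List.get_eq_getElem]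
    rw [List.getElem_append_right (by simp)]
    simp
  have member : ∀ n, Odd n → ∀ i : Fin (W n).length, Even (i : ℕ) → (W n).get i := by
    intro n hn i hi
    have hi2 : (i : ℕ) < n + 1 := lt_of_lt_of_le i.2 (hlen n).le
    have hne' : (i : ℕ) ≠ n := by
      intro he; rw [he] at hi; exact (Nat.not_odd_iff_even.mpr hi) hn
    have := hgetlt n i i.2 (by omega)
    simpa using this
  have h1 : Sat (TrW (2*N+1)) φ 0 := by
    have := (hφ (W (2*N+1)) (hne _)).mp (member _ (by exact ⟨N, by ring⟩))
    rwa [hmap] at this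
  have h2 : Sat (TrW (2*N+2)) φ 0 := (hN (2*N+1) (2*N+2) (by omega) (by omega)).mp h1
  have h3 := (hφ (W (2*N+2)) (hne _)).mpr (by rwa [hmap])
  have h4 := h3 ⟨2*N+2, by rw [hlen]; omega⟩ ⟨N+1, by ring⟩
  exact hgetn (2*N+2) _ h4

lemma part2 : ∀ w : List Prop, w ≠ [] →
    ((∀ i : Fin w.length, Even (i : ℕ) → w.get i) ↔
      (∃ σ : List ((ℤ → Prop) × ℤ), σ ≠ [] ∧
        (σ.getD 0 (fun _ => False, 0)).2 = 0 ∧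
        (∀ i, i + 1 < σ.length →
          (σ.getD (i + 1) (fun _ => False, 0)).2 = (σ.getD i (fun _ => False, 0)).2 + 1) ∧
        (∀ i < σ.length,
          (∃ y : ℤ, (σ.getD i (fun _ => False, 0)).2 = y + y) →
            (σ.getD i (fun _ => False, 0)).1 (σ.getD i (fun _ => False, 0)).2) ∧
        σ.map (fun s => ∃ v : ℤ, s.1 v) = w)) := by
  intro w hw
  have hwlen : 0 < w.length := List.length_pos_iff.mpr hw
  constructor
  · intro h
    refine ⟨(List.range w.length).map
      (fun i : ℕ => ((fun v : ℤ => v = (i : ℤ) ∧ w.getD i False), ((i : ℕ) : ℤ))),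
      ?_, ?_, ?_, ?_, ?_⟩
    · intro hc
      have := congrArg List.length hc
      simp only [List.length_map, List.length_range, List.length_nil] at this
      omega
    · rw [List.getD_eq_getElem _ _ (by simpa using hwlen)]
      simp
    · intro i hi
      simp only [List.length_map, List.length_range] at hi
      rw [List.getD_eq_getElem _ _ (by simpa using hi),
        List.getD_eq_getElem _ _ (by simp; omega)]
      simp only [List.getElem_map, List.getElem_range]
      push_cast; ring
    · intro i hi hy
      simp only [List.length_map, List.length_range] at hi
      rw [List.getD_eq_getElem _ _ (by simpa using hi)] at hy ⊢
      simp only [List.getElem_map, List.getElem_range] at hy ⊢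
      refine ⟨by trivial, ?_⟩
      obtain ⟨y, hy⟩ := hy
      have heven : Even i := by
        have : Even ((i : ℤ)) := ⟨y, hy⟩
        exact_mod_cast this
      have := h ⟨i, hi⟩ heven
      rw [List.getD_eq_getElem _ _ hi]
      simpa using this
    · apply List.ext_getElem
      · simp
      · intro i h1 h2
        simp only [List.getElem_map, List.getElem_range]
        apply propext
        constructor
        · rintro ⟨v, hv, hw'⟩
          rwa [List.getD_eq_getElem _ _ h2] at hw'
        · intro hwi
          exact ⟨(i : ℤ), rfl, by rwa [List.getD_eq_getElem _ _ h2]⟩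
  · rintro ⟨σ, hne, h0, hsucc, hP, hmapeq⟩
    have hlen : σ.length = w.length := by
      have := congrArg List.length hmapeq
      simpa using this
    have hx : ∀ i < σ.length, (σ.getD i (fun _ => False, 0)).2 = (i : ℤ) := by
      intro i
      induction i with
      | zero => intro _; simpa using h0
      | succ k ih =>
        intro hk
        rw [hsucc k hk, ih (by omega)]
        push_cast; ring
    intro i hi
    have hiσ : (i : ℕ) < σ.length := by rw [hlen]; exact i.2
    have hy : ∃ y : ℤ, (σ.getD (i : ℕ) (fun _ => False, 0)).2 = y + y := by
      obtain ⟨k, hk⟩ := hi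
      exact ⟨(k : ℤ), by rw [hx _ hiσ, hk]; push_cast; ring⟩
    have hPi := hP (i : ℕ) hiσ hy
    rw [List.getD_eq_getElem _ _ hiσ] at hPi
    have h1 : (i : ℕ) < (List.map (fun s : (ℤ → Prop) × ℤ => ∃ v : ℤ, s.1 v) σ).length := by
      simpa using hiσ
    have he := List.getElem_of_eq hmapeq h1
    rw [List.getElem_map] at he
    rw [List.get_eq_getElem]
    exact Eq.mp he ⟨_, hPi⟩

/-- the language of (nonempty) finite words in which `p` holds at every even
position is not LTLf-definable (Wolper), yet it is the Boolean abstraction of the language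
of the LTLfMT formula `x = 0 ∧ G(wX x = x+1 ∧ (∃y (x = y+y) → P(x)))` over LIA with an
uninterpreted unary predicate `P`.  A first-order state is a pair of an interpretation of
`P` and a value for `x`; its Boolean abstraction is the proposition `∃v, P(v)`. -/
theorem stmt8 :
    (¬ ∃ φ : LTLf Unit, ∀ w : List Prop, w ≠ [] →
        ((∀ i : Fin w.length, Even (i : ℕ) → w.get i) ↔
          Sat (w.map fun q => fun _ : Unit => q) φ 0)) ∧
    (∀ w : List Prop, w ≠ [] →
      ((∀ i : Fin w.length, Even (i : ℕ) → w.get i) ↔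
        (∃ σ : List ((ℤ → Prop) × ℤ), σ ≠ [] ∧
          (σ.getD 0 (fun _ => False, 0)).2 = 0 ∧
          (∀ i, i + 1 < σ.length →
            (σ.getD (i + 1) (fun _ => False, 0)).2 = (σ.getD i (fun _ => False, 0)).2 + 1) ∧
          (∀ i < σ.length,
            (∃ y : ℤ, (σ.getD i (fun _ => False, 0)).2 = y + y) →
              (σ.getD i (fun _ => False, 0)).1 (σ.getD i (fun _ => False, 0)).2) ∧
          σ.map (fun s => ∃ v : ℤ, s.1 v) = w))) := ⟨part1, part2⟩
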